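/- arXiv:0904.2543 — 2 statements merged into one kernel-verified Lean document; each statement's English description precedes it below -/
import Mathlib

section
/- For every integer m ≥ 1 the following identity holds in K, expressing x(2m+1) as a Laurent polynomial in the cluster {x₁, w, x₃}: x(2m+1) · x₁^{m−1} x₃^{m−2} = Σ_{e₁,e₃ ∈ ℕ} C(m−1−e₃, m−1−e₁) · C(e₁−1, e₃) · x₁^{2e₃} w^{e₁−e₃} x₃^{2m−2e₁−2} + x₃^{2m−2}, where the sum has finitely many nonzero terms. -/
noncomputable section

abbrev Kf : Type := FractionRing (MvPolynomial (Fin 3) ℚ)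

def X1 : Kf := algebraMap (MvPolynomial (Fin 3) ℚ) Kf (MvPolynomial.X 0)
def X2 : Kf := algebraMap (MvPolynomial (Fin 3) ℚ) Kf (MvPolynomial.X 1)
def X3 : Kf := algebraMap (MvPolynomial (Fin 3) ℚ) Kf (MvPolynomial.X 2)

/-- Binomial coefficient of integers, with the convention that it vanishes
unless `0 ≤ b ≤ a`. -/
def ichoose (a b : ℤ) : ℕ := if 0 ≤ b ∧ b ≤ a then a.toNat.choose b.toNat else 0

/-! ### Auxiliary lemmas -/

lemma ichoose_eq_zero {a b : ℤ} (h : ¬ (0 ≤ b ∧ b ≤ a)) : ichoose a b = 0 := if_neg h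

lemma ichoose_self {a : ℤ} (h : 0 ≤ a) : ichoose a a = 1 := by
  rw [ichoose, if_pos ⟨h, le_refl _⟩, Nat.choose_self]

lemma pascal (r s : ℤ) :
    (ichoose r s : ℤ) = ichoose (r-1) (s-1) + ichoose (r-1) s
      + (if r = 0 ∧ s = 0 then 1 else 0) := by
  rcases lt_trichotomy s 0 with hs | hs | hs
  · rw [ichoose_eq_zero (by omega), ichoose_eq_zero (a := r-1) (by omega),
      ichoose_eq_zero (a := r-1) (b := s) (by omega), if_neg (by omega)]
    simp
  · subst hs
    rcases lt_trichotomy r 0 with hr | hr | hr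
    · rw [ichoose_eq_zero (by omega), ichoose_eq_zero (a := r-1) (by omega),
        ichoose_eq_zero (a := r-1) (b := 0) (by omega), if_neg (by omega)]
      simp
    · subst hr
      rw [ichoose_self le_rfl, ichoose_eq_zero (by omega), ichoose_eq_zero (by omega),
        if_pos ⟨rfl, rfl⟩]
      simp
    · rw [ichoose, if_pos ⟨le_rfl, by omega⟩, ichoose_eq_zero (by omega),
        ichoose, if_pos ⟨le_rfl, by omega⟩, if_neg (by omega)]
      simp
  · by_cases hr : s ≤ r
    · have h1 : ichoose r s = r.toNat.choose s.toNat := if_pos ⟨by omega, hr⟩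
      have h2 : ichoose (r-1) (s-1) = (r-1).toNat.choose (s-1).toNat :=
        if_pos ⟨by omega, by omega⟩
      have h3 : ichoose (r-1) s = (r-1).toNat.choose s.toNat := by
        by_cases h : s ≤ r - 1
        · exact if_pos ⟨by omega, h⟩
        · rw [ichoose_eq_zero (by omega), Nat.choose_eq_zero_of_lt (by omega)]
      rw [h1, h2, h3, if_neg (by omega)]
      have e1 : r.toNat = (r-1).toNat + 1 := by omega
      have e2 : s.toNat = (s-1).toNat + 1 := by omega
      rw [e1, e2, Nat.choose_succ_succ]
      push_cast; ring
    · rw [ichoose_eq_zero (by omega), ichoose_eq_zero (by omega),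
        ichoose_eq_zero (by omega), if_neg (by omega)]
      simp

lemma cId' (p q r s : ℤ) (hrel : q - p = s - r - 1) (hp : r = 0 → s = 0 → 0 ≤ p) :
    (ichoose (p+1) (q+1) : ℤ) * ichoose r s + (ichoose p q : ℤ) * ichoose (r-1) (s-1)
      = (ichoose p q : ℤ) * ichoose r s + (ichoose p (q+1) : ℤ) * ichoose (r-1) s
        + (ichoose (p+1) (q+1) : ℤ) * ichoose (r-1) (s-1)
        + (if r = 0 ∧ s = 0 then 1 else 0) := by
  have hA : (ichoose (p+1) (q+1) : ℤ) = ichoose p q + ichoose p (q+1)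
      + (if p + 1 = 0 ∧ q + 1 = 0 then 1 else 0) := by
    simpa using pascal (p+1) (q+1)
  have hB := pascal r s
  by_cases hd : r = 0 ∧ s = 0
  · obtain ⟨rfl, rfl⟩ := hd
    have hp0 : 0 ≤ p := hp rfl rfl
    rw [if_neg (by omega)] at hA
    have hq : q + 1 = p := by omega
    rw [hq, ichoose_self hp0] at hA
    rw [if_pos ⟨rfl, rfl⟩, hq, ichoose_self hp0,
      ichoose_eq_zero (a := (0:ℤ)-1) (b := (0:ℤ)-1) (by omega),
      ichoose_eq_zero (a := (0:ℤ)-1) (b := (0:ℤ)) (by omega),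
      ichoose_self (le_refl (0:ℤ))]
    push_cast at hA ⊢
    linarith
  · rw [if_neg hd] at hB ⊢
    by_cases hd2 : p + 1 = 0 ∧ q + 1 = 0
    · have hs : s = r + 1 := by omega
      rw [hs, ichoose_eq_zero (a := r) (b := r+1) (by omega),
        ichoose_eq_zero (a := r-1) (b := r+1-1) (by omega),
        ichoose_eq_zero (a := r-1) (b := r+1) (by omega)]
      push_cast
      ring
    · rw [if_neg hd2] at hA
      linear_combination ((ichoose r s : ℤ) - (ichoose (r-1) (s-1) : ℤ)) * hA
        + (ichoose p (q+1) : ℤ) * hB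

lemma X1_ne_zero : X1 ≠ 0 := by
  rw [X1]
  simpa using (MvPolynomial.X_ne_zero (R := ℚ) (0 : Fin 3))

lemma X2_ne_zero : X2 ≠ 0 := by
  rw [X2]
  simpa using (MvPolynomial.X_ne_zero (R := ℚ) (1 : Fin 3))

lemma X3_ne_zero : X3 ≠ 0 := by
  rw [X3]
  simpa using (MvPolynomial.X_ne_zero (R := ℚ) (2 : Fin 3))

lemma X1_add_X3_ne_zero : X1 + X3 ≠ 0 := by
  rw [X1, X3, ← map_add]
  intro h
  rw [show (0:Kf) = algebraMap (MvPolynomial (Fin 3) ℚ) Kf 0 by simp] at h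
  have h2 := IsFractionRing.injective (MvPolynomial (Fin 3) ℚ) Kf h
  have h3 := congrArg (MvPolynomial.eval (fun _ => (1:ℚ))) h2
  simp at h3

/-- The general term of the Laurent expansion. -/
def Gw (w : Kf) (m a b : ℤ) : Kf :=
  ((ichoose (m - 1 - b) (m - 1 - a) * ichoose (a - 1) b : ℕ) : Kf) *
    X1 ^ (2 * b) * w ^ (a - b) * X3 ^ (2 * m - 2 * a - 2)

lemma Gw_vanish (w : Kf) (m a b : ℤ) (h : ¬(0 ≤ b ∧ b < a ∧ a < m)) : Gw w m a b = 0 := by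
  have hz : ichoose (m - 1 - b) (m - 1 - a) * ichoose (a - 1) b = 0 := by
    by_cases h1 : 0 ≤ b ∧ b ≤ a - 1
    · rw [ichoose_eq_zero (a := m - 1 - b) (b := m - 1 - a) (by omega), zero_mul]
    · rw [ichoose_eq_zero h1, mul_zero]
  rw [Gw, hz]
  simp

lemma point (w : Kf) (hw : w ≠ 0) (m a b : ℤ) (hm : 1 ≤ m) :
    Gw w (m+1) a b =
      X1^2 * Gw w m (a-1) (b-1) + X3^2 * Gw w m a b + w * Gw w m (a-1) b
      - X1^2 * X3^2 * Gw w (m-1) (a-1) (b-1)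
      + (if a = 1 ∧ b = 0 then w * X3 ^ (2*m-2) else 0) := by
  have hX1 := X1_ne_zero
  have hX3 := X3_ne_zero
  by_cases hab : a = 1 ∧ b = 0
  · obtain ⟨ha, hb⟩ := hab
    subst ha hb
    rw [if_pos ⟨rfl, rfl⟩]
    have z1 : Gw w m ((1:ℤ)-1) ((0:ℤ)-1) = 0 := Gw_vanish _ _ _ _ (by omega)
    have z2 : Gw w (m-1) ((1:ℤ)-1) ((0:ℤ)-1) = 0 := Gw_vanish _ _ _ _ (by omega)
    have z3 : Gw w m ((1:ℤ)-1) 0 = 0 := Gw_vanish _ _ _ _ (by omega)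
    rw [z1, z2, z3]
    simp only [Gw]
    have key := pascal (m - 1 - (0:ℤ)) (m - 1 - (1:ℤ))
    rw [if_neg (by omega)] at key
    have key2 : (ichoose (m+1-1-(0:ℤ)) (m+1-1-(1:ℤ)) : ℤ)
        = ichoose (m-1-(0:ℤ)) (m-1-(1:ℤ)) + ichoose (m-1-(0:ℤ)) (m-1-(0:ℤ)) := by
      rw [show m+1-1-(0:ℤ) = (m-1-0)+1 by ring, show m+1-1-(1:ℤ) = (m-1-1)+1 by ring]
      calc (ichoose ((m-1-(0:ℤ))+1) ((m-1-(1:ℤ))+1) : ℤ)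
          = ichoose (m-1-(0:ℤ)+1-1) (m-1-(1:ℤ)+1-1) + ichoose (m-1-(0:ℤ)+1-1) (m-1-(1:ℤ)+1)
            + (if m-1-(0:ℤ)+1 = 0 ∧ m-1-(1:ℤ)+1 = 0 then 1 else 0) := pascal _ _
        _ = _ := by
            rw [if_neg (by omega), show m-1-(0:ℤ)+1-1 = m-1-0 by ring,
              show m-1-(1:ℤ)+1-1 = m-1-1 by ring, show m-1-(1:ℤ)+1 = m-1-0 by ring]
            ring
    rw [ichoose_self (by omega : (0:ℤ) ≤ m-1-0)] at key2
    have keyK := congrArg (fun z : ℤ => (z : Kf)) key2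
    push_cast at keyK
    rw [show 2*m-2 = (2*m-2*1-2) + ((2:ℕ):ℤ) by push_cast; ring,
      zpow_add₀ hX3, zpow_natCast,
      show 2*(m+1)-2*1-2 = (2*m-2*1-2) + ((2:ℕ):ℤ) by push_cast; ring,
      zpow_add₀ hX3, zpow_natCast]
    push_cast
    rw [ichoose_self (le_refl (0:ℤ))]
    simp only [zpow_zero, zpow_one, Nat.cast_one, mul_one, one_mul]
    linear_combination (w * X3 ^ (2*m-2-2) * X3^2) * keyK
  · rw [if_neg hab]
    have key := cId' (m-1-b) (m-1-a) (a-1) b (by ring) (by intro h1 h2; omega)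
    rw [show m-1-b+1 = m-b by ring, show m-1-a+1 = m-a by ring,
      if_neg (by omega : ¬(a-1 = 0 ∧ b = 0))] at key
    have keyK := congrArg (fun z : ℤ => (z : Kf)) key
    push_cast at keyK
    simp only [Gw]
    rw [show m+1-1-b = m-b by ring, show m+1-1-a = m-a by ring,
      show m-1-(b-1) = m-b by ring, show m-1-(a-1) = m-a by ring,
      show m-1-1-(b-1) = m-1-b by ring, show m-1-1-(a-1) = m-1-a by ring,
      show a-1-(b-1) = a-b by ring,
      show 2*(m+1)-2*a-2 = (2*m-2*a-2) + ((2:ℕ):ℤ) by push_cast; ring,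
      show 2*m-2*(a-1)-2 = (2*m-2*a-2) + ((2:ℕ):ℤ) by push_cast; ring,
      show 2*(m-1)-2*(a-1)-2 = 2*m-2*a-2 by ring,
      show (2:ℤ)*b = 2*(b-1) + ((2:ℕ):ℤ) by push_cast; ring,
      show a-b = (a-1-b) + ((1:ℕ):ℤ) by push_cast; ring]
    simp only [zpow_add₀ hX1, zpow_add₀ hX3, zpow_add₀ hw, zpow_natCast, pow_one]
    push_cast
    linear_combination
      (X1 ^ (2*(b-1)) * X1^2 * w ^ (a-1-b) * w * X3 ^ (2*m-2*a-2) * X3^2) * keyK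

lemma sum_shift (h : ℤ → Kf) (n : ℕ) (h0 : h (-1) = 0) (hn : h ((n:ℤ) - 1) = 0) :
    ∑ a ∈ Finset.range n, h ((a:ℤ) - 1) = ∑ a ∈ Finset.range n, h (a:ℤ) := by
  cases n with
  | zero => simp
  | succ n =>
    rw [Finset.sum_range_succ' (fun a => h ((a:ℤ) - 1)), Finset.sum_range_succ (fun a => h (a:ℤ))]
    have e0 : ((0:ℕ):ℤ) - 1 = -1 := by norm_num
    rw [e0, h0, add_zero]
    have e1 : h (n:ℤ) = 0 := by
      rw [show ((n:ℤ)) = ((n+1 : ℕ):ℤ) - 1 by push_cast; ring]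
      exact hn
    rw [e1, add_zero]
    apply Finset.sum_congr rfl
    intro a _
    congr 1
    push_cast
    ring

/-- Partial sums over a box. -/
def SSw (w : Kf) (m : ℤ) (n : ℕ) : Kf :=
  ∑ a ∈ Finset.range n, ∑ b ∈ Finset.range n, Gw w m a b

lemma SSext (w : Kf) (m : ℤ) {n n' : ℕ} (hm : m ≤ (n:ℤ)) (h : n ≤ n') :
    SSw w m n = SSw w m n' := by
  unfold SSw
  calc ∑ a ∈ Finset.range n, ∑ b ∈ Finset.range n, Gw w m a b
      = ∑ a ∈ Finset.range n, ∑ b ∈ Finset.range n', Gw w m a b := by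
        apply Finset.sum_congr rfl
        intro a ha
        apply Finset.sum_subset (Finset.range_subset_range.mpr h)
        intro b _ hb
        have ha' : a < n := Finset.mem_range.mp ha
        have hb' : ¬ b < n := fun hc => hb (Finset.mem_range.mpr hc)
        exact Gw_vanish _ _ _ _ (by push_cast; omega)
    _ = ∑ a ∈ Finset.range n', ∑ b ∈ Finset.range n', Gw w m a b := by
        apply Finset.sum_subset (Finset.range_subset_range.mpr h)
        intro a _ ha
        have ha' : ¬ a < n := fun hc => ha (Finset.mem_range.mpr hc)
        exact Finset.sum_eq_zero fun b _ => Gw_vanish _ _ _ _ (by push_cast; omega)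

lemma SSrec (w : Kf) (hw : w ≠ 0) (m : ℤ) (hm : 1 ≤ m) (n : ℕ) (hn : m + 1 ≤ (n:ℤ)) :
    SSw w (m+1) n = X1^2 * SSw w m n + X3^2 * SSw w m n + w * SSw w m n
      - X1^2 * X3^2 * SSw w (m-1) n + w * X3^(2*m-2) := by
  have h10 : (1:ℕ) < n := by omega
  unfold SSw
  have hpt : ∑ a ∈ Finset.range n, ∑ b ∈ Finset.range n, Gw w (m+1) (a:ℤ) (b:ℤ)
      = ∑ a ∈ Finset.range n, ∑ b ∈ Finset.range n,
        (X1^2 * Gw w m ((a:ℤ)-1) ((b:ℤ)-1) + X3^2 * Gw w m (a:ℤ) (b:ℤ)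
          + w * Gw w m ((a:ℤ)-1) (b:ℤ) - X1^2*X3^2*Gw w (m-1) ((a:ℤ)-1) ((b:ℤ)-1)
          + (if (a:ℤ) = 1 ∧ (b:ℤ) = 0 then w * X3^(2*m-2) else 0)) :=
    Finset.sum_congr rfl fun a _ => Finset.sum_congr rfl fun b _ => point w hw m _ _ hm
  rw [hpt]
  simp only [Finset.sum_add_distrib, Finset.sum_sub_distrib, ← Finset.mul_sum]
  have sh1 : ∑ a ∈ Finset.range n, ∑ b ∈ Finset.range n, Gw w m ((a:ℤ)-1) ((b:ℤ)-1)
      = ∑ a ∈ Finset.range n, ∑ b ∈ Finset.range n, Gw w m (a:ℤ) (b:ℤ) := by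
    calc ∑ a ∈ Finset.range n, ∑ b ∈ Finset.range n, Gw w m ((a:ℤ)-1) ((b:ℤ)-1)
        = ∑ a ∈ Finset.range n, ∑ b ∈ Finset.range n, Gw w m ((a:ℤ)-1) (b:ℤ) := by
          apply Finset.sum_congr rfl
          intro a ha
          have ha' : a < n := Finset.mem_range.mp ha
          exact sum_shift (fun t => Gw w m ((a:ℤ)-1) t) n
            (Gw_vanish _ _ _ _ (by omega))
            (Gw_vanish _ _ _ _ (by omega))
      _ = _ := by
          exact sum_shift (fun t => ∑ b ∈ Finset.range n, Gw w m t (b:ℤ)) n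
            (Finset.sum_eq_zero fun b _ => Gw_vanish _ _ _ _ (by omega))
            (Finset.sum_eq_zero fun b _ => Gw_vanish _ _ _ _ (by omega))
  have sh3 : ∑ a ∈ Finset.range n, ∑ b ∈ Finset.range n, Gw w m ((a:ℤ)-1) (b:ℤ)
      = ∑ a ∈ Finset.range n, ∑ b ∈ Finset.range n, Gw w m (a:ℤ) (b:ℤ) := by
    exact sum_shift (fun t => ∑ b ∈ Finset.range n, Gw w m t (b:ℤ)) n
      (Finset.sum_eq_zero fun b _ => Gw_vanish _ _ _ _ (by omega))
      (Finset.sum_eq_zero fun b _ => Gw_vanish _ _ _ _ (by omega))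
  have sh4 : ∑ a ∈ Finset.range n, ∑ b ∈ Finset.range n, Gw w (m-1) ((a:ℤ)-1) ((b:ℤ)-1)
      = ∑ a ∈ Finset.range n, ∑ b ∈ Finset.range n, Gw w (m-1) (a:ℤ) (b:ℤ) := by
    calc ∑ a ∈ Finset.range n, ∑ b ∈ Finset.range n, Gw w (m-1) ((a:ℤ)-1) ((b:ℤ)-1)
        = ∑ a ∈ Finset.range n, ∑ b ∈ Finset.range n, Gw w (m-1) ((a:ℤ)-1) (b:ℤ) := by
          apply Finset.sum_congr rfl
          intro a ha
          have ha' : a < n := Finset.mem_range.mp ha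
          exact sum_shift (fun t => Gw w (m-1) ((a:ℤ)-1) t) n
            (Gw_vanish _ _ _ _ (by omega))
            (Gw_vanish _ _ _ _ (by omega))
      _ = _ := by
          exact sum_shift (fun t => ∑ b ∈ Finset.range n, Gw w (m-1) t (b:ℤ)) n
            (Finset.sum_eq_zero fun b _ => Gw_vanish _ _ _ _ (by omega))
            (Finset.sum_eq_zero fun b _ => Gw_vanish _ _ _ _ (by omega))
  have hδ : (∑ a ∈ Finset.range n, ∑ b ∈ Finset.range n,
      (if (a:ℤ) = 1 ∧ (b:ℤ) = 0 then w * X3^(2*m-2) else 0)) = w * X3^(2*m-2) := by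
    rw [Finset.sum_eq_single 1]
    · rw [Finset.sum_eq_single 0]
      · norm_num
      · intro b _ hb
        exact if_neg (fun hc => hb (by exact_mod_cast hc.2))
      · intro h0
        exact absurd (Finset.mem_range.mpr (by omega)) h0
    · intro a _ ha
      exact Finset.sum_eq_zero fun b _ => if_neg (fun hc => ha (by exact_mod_cast hc.1))
    · intro h1
      exact absurd (Finset.mem_range.mpr h10) h1
  rw [sh1, sh3, sh4, hδ]

set_option maxHeartbeats 2000000 in
theorem stmt4 (x : ℤ → Kf)
    (h1 : x 1 = X1) (h2 : x 2 = X2) (h3 : x 3 = X3)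
    (hne : ∀ m : ℤ, x m ≠ 0)
    (hrec : ∀ m : ℤ, x m * x (m + 3) = x (m + 1) * x (m + 2) + 1)
    (w : Kf) (hw : w = (X1 + X3) / X2) :
    ∀ m : ℤ, 1 ≤ m →
      ∀ f : ℕ × ℕ → Kf,
        (f = fun e =>
          ((ichoose (m - 1 - (e.2 : ℤ)) (m - 1 - (e.1 : ℤ)) *
            ichoose ((e.1 : ℤ) - 1) (e.2 : ℤ) : ℕ) : Kf) *
            X1 ^ (2 * (e.2 : ℤ)) * w ^ ((e.1 : ℤ) - (e.2 : ℤ)) *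
            X3 ^ (2 * m - 2 * (e.1 : ℤ) - 2)) →
        (Function.support f).Finite ∧
        x (2 * m + 1) * X1 ^ (m - 1) * X3 ^ (m - 2) =
          (∑ᶠ e : ℕ × ℕ, f e) + X3 ^ (2 * m - 2) := by
  have hX1 := X1_ne_zero
  have hX2 := X2_ne_zero
  have hX3 := X3_ne_zero
  have hwne : w ≠ 0 := by
    rw [hw]
    exact div_ne_zero X1_add_X3_ne_zero hX2
  -- the invariant for odd indices
  have hodd : ∀ k : ℕ, x (2*(k:ℤ)+1) + x (2*(k:ℤ)+3) = w * x (2*(k:ℤ)+2) := by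
    intro k
    induction k with
    | zero =>
      norm_num [h1, h2, h3, hw]
      field_simp
    | succ k ih =>
      have hr1 := hrec (2*(k:ℤ)+1)
      have hr2 := hrec (2*(k:ℤ)+2)
      rw [show 2*(k:ℤ)+1+3 = 2*(k:ℤ)+4 by ring, show 2*(k:ℤ)+1+1 = 2*(k:ℤ)+2 by ring,
        show 2*(k:ℤ)+1+2 = 2*(k:ℤ)+3 by ring] at hr1
      rw [show 2*(k:ℤ)+2+3 = 2*(k:ℤ)+5 by ring, show 2*(k:ℤ)+2+1 = 2*(k:ℤ)+3 by ring,
        show 2*(k:ℤ)+2+2 = 2*(k:ℤ)+4 by ring] at hr2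
      push_cast
      rw [show 2*((k:ℤ)+1)+1 = 2*(k:ℤ)+3 by ring, show 2*((k:ℤ)+1)+3 = 2*(k:ℤ)+5 by ring,
        show 2*((k:ℤ)+1)+2 = 2*(k:ℤ)+4 by ring]
      have key : x (2*(k:ℤ)+2) * (x (2*(k:ℤ)+3) + x (2*(k:ℤ)+5))
          = x (2*(k:ℤ)+2) * (w * x (2*(k:ℤ)+4)) := by
        linear_combination hr2 + x (2*(k:ℤ)+4) * ih - hr1
      exact mul_left_cancel₀ (hne _) key
  -- the invariant for even indices
  set v : Kf := (x 2 + x 4) / x 3 with hv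
  have heven : ∀ k : ℕ, x (2*(k:ℤ)+2) + x (2*(k:ℤ)+4) = v * x (2*(k:ℤ)+3) := by
    intro k
    induction k with
    | zero =>
      norm_num [hv]
      field_simp [hne 3]
    | succ k ih =>
      have hr1 := hrec (2*(k:ℤ)+2)
      have hr2 := hrec (2*(k:ℤ)+3)
      rw [show 2*(k:ℤ)+2+3 = 2*(k:ℤ)+5 by ring, show 2*(k:ℤ)+2+1 = 2*(k:ℤ)+3 by ring,
        show 2*(k:ℤ)+2+2 = 2*(k:ℤ)+4 by ring] at hr1
      rw [show 2*(k:ℤ)+3+3 = 2*(k:ℤ)+6 by ring, show 2*(k:ℤ)+3+1 = 2*(k:ℤ)+4 by ring,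
        show 2*(k:ℤ)+3+2 = 2*(k:ℤ)+5 by ring] at hr2
      push_cast
      rw [show 2*((k:ℤ)+1)+2 = 2*(k:ℤ)+4 by ring, show 2*((k:ℤ)+1)+4 = 2*(k:ℤ)+6 by ring,
        show 2*((k:ℤ)+1)+3 = 2*(k:ℤ)+5 by ring]
      have key : x (2*(k:ℤ)+3) * (x (2*(k:ℤ)+4) + x (2*(k:ℤ)+6))
          = x (2*(k:ℤ)+3) * (v * x (2*(k:ℤ)+5)) := by
        linear_combination hr2 + x (2*(k:ℤ)+5) * ih - hr1
      exact mul_left_cancel₀ (hne _) key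
  -- the coefficient identity
  have h4 : X1 * x 4 = X2 * X3 + 1 := by
    have := hrec 1
    norm_num at this
    rw [h1, h2, h3] at this
    linear_combination this
  have hE : (w * v) * (X1 * X3) = X1^2 + X3^2 + w + 2*(X1*X3) := by
    rw [hw, hv, h2, h3]
    have hx4 : x 4 = (X2 * X3 + 1) / X1 := by
      field_simp
      linear_combination h4
    rw [hx4]
    field_simp
    ring
  -- the three-term recurrence for odd cluster variables
  have hrecur : ∀ k : ℕ, x (2*(k:ℤ)+5) * (X1 * X3)
      = (X1^2 + X3^2 + w) * x (2*(k:ℤ)+3) - (X1*X3) * x (2*(k:ℤ)+1) := by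
    intro k
    have ho1 := hodd k
    have ho2 := hodd (k+1)
    push_cast at ho2
    rw [show 2*((k:ℤ)+1)+1 = 2*(k:ℤ)+3 by ring, show 2*((k:ℤ)+1)+3 = 2*(k:ℤ)+5 by ring,
      show 2*((k:ℤ)+1)+2 = 2*(k:ℤ)+4 by ring] at ho2
    have he1 := heven k
    have h5 : x (2*(k:ℤ)+5) = w*v*x (2*(k:ℤ)+3) - x (2*(k:ℤ)+1) - 2*x (2*(k:ℤ)+3) := by
      linear_combination ho2 + w * he1 + ho1
    linear_combination (X1*X3) * h5 + x (2*(k:ℤ)+3) * hE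
  -- the main induction
  have main : ∀ k : ℕ, x (2*(k:ℤ)+3) * X1^(k:ℤ) * X3^(k:ℤ)
      = (SSw w ((k:ℤ)+1) (k+1) + X3^(2*(k:ℤ))) * X3 := by
    intro k
    induction k using Nat.strong_induction_on with
    | _ k ih =>
      match k with
      | 0 =>
        have hS : SSw w 1 1 = 0 := by
          rw [SSw]
          rw [Finset.sum_range_one, Finset.sum_range_one]
          apply Gw_vanish
          omega
        norm_num [hS, h3]
      | 1 =>
        have hS : SSw w 2 2 = w := by
          rw [SSw]
          simp only [Finset.sum_range_succ, Finset.sum_range_zero, Nat.cast_zero,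
            Nat.cast_one, zero_add]
          rw [Gw_vanish w 2 0 0 (by norm_num), Gw_vanish w 2 0 1 (by norm_num),
            Gw_vanish w 2 1 1 (by norm_num)]
          rw [Gw]
          norm_num [ichoose]
        have h5 : X2 * x 5 = X3 * x 4 + 1 := by
          have := hrec 2
          norm_num at this
          rw [h2, h3] at this
          linear_combination this
        have hwX2 : w * X2 = X1 + X3 := by
          rw [hw]
          field_simp
        have hx5 : x 5 * X1 = w + X3^2 := by
          apply mul_right_cancel₀ hX2
          linear_combination X3 * h4 + X1 * h5 - hwX2
        norm_num [hS, zpow_ofNat]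
        exact Or.inl hx5
      | (j+2) =>
        have ih1 := ih j (by omega)
        have ih2 := ih (j+1) (by omega)
        have hr := hrecur (j+1)
        push_cast at hr ih2 ⊢
        rw [show 2*((j:ℤ)+1)+5 = 2*(j:ℤ)+7 by ring, show 2*((j:ℤ)+1)+3 = 2*(j:ℤ)+5 by ring,
          show 2*((j:ℤ)+1)+1 = 2*(j:ℤ)+3 by ring] at hr
        rw [show 2*((j:ℤ)+1)+3 = 2*(j:ℤ)+5 by ring] at ih2
        rw [show 2*((j:ℤ)+2)+3 = 2*(j:ℤ)+7 by ring]
        rw [SSext w ((j:ℤ)+1) (by push_cast; omega) (by omega : j+1 ≤ j+3)] at ih1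
        rw [SSext w ((j:ℤ)+1+1) (by push_cast; omega) (by omega : j+1+1 ≤ j+3)] at ih2
        have hS := SSrec w hwne ((j:ℤ)+2) (by omega) (j+3) (by push_cast; omega)
        rw [show (j:ℤ)+2+1 = (j:ℤ)+3 by ring, show (j:ℤ)+2-1 = (j:ℤ)+1 by ring] at hS
        rw [show 2*((j:ℤ)+2)-2 = 2*(j:ℤ)+2 by ring] at hS
        rw [show (j:ℤ)+2+1 = (j:ℤ)+3 by ring, show j+2+1 = j+3 by omega]
        norm_cast at hr ih1 ih2 hS ⊢
        linear_combination (X1^j * X1 * X3^j * X3) * hr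
          + (X1^2 + X3^2 + w) * ih2 - X1^2 * X3^2 * ih1 - X3 * hS
  -- conclusion
  intro m hm f hf
  obtain ⟨k, rfl⟩ : ∃ k : ℕ, m = (k:ℤ) + 1 := ⟨(m-1).toNat, by omega⟩
  subst hf
  have hfG : (fun e : ℕ × ℕ =>
      ((ichoose ((k:ℤ) + 1 - 1 - (e.2 : ℤ)) ((k:ℤ) + 1 - 1 - (e.1 : ℤ)) *
        ichoose ((e.1 : ℤ) - 1) (e.2 : ℤ) : ℕ) : Kf) *
        X1 ^ (2 * (e.2 : ℤ)) * w ^ ((e.1 : ℤ) - (e.2 : ℤ)) *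
        X3 ^ (2 * ((k:ℤ)+1) - 2 * (e.1 : ℤ) - 2))
      = fun e : ℕ × ℕ => Gw w ((k:ℤ)+1) (e.1 : ℤ) (e.2 : ℤ) := rfl
  rw [hfG]
  have hsupp : Function.support (fun e : ℕ × ℕ => Gw w ((k:ℤ)+1) (e.1 : ℤ) (e.2 : ℤ))
      ⊆ ↑(Finset.range (k+1) ×ˢ Finset.range (k+1)) := by
    intro e he
    by_contra hc
    apply he
    have hc' : ¬ (e.1 < k+1 ∧ e.2 < k+1) := by
      intro hd
      exact hc (by simpa [Finset.mem_product] using hd)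
    exact Gw_vanish _ _ _ _ (by push_cast; omega)
  constructor
  · exact Set.Finite.subset (Finset.finite_toSet _) hsupp
  · have hsum : (∑ᶠ e : ℕ × ℕ, Gw w ((k:ℤ)+1) (e.1 : ℤ) (e.2 : ℤ))
        = SSw w ((k:ℤ)+1) (k+1) := by
      rw [finsum_eq_sum_of_support_subset _ hsupp, SSw, Finset.sum_product]
    rw [hsum]
    have hmain := main k
    rw [show 2*((k:ℤ)+1)+1 = 2*(k:ℤ)+3 by ring, show (k:ℤ)+1-1 = (k:ℤ) by ring,
      show 2*((k:ℤ)+1)-2 = 2*(k:ℤ) by ring]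
    have q : X3^((k:ℤ)) = X3^((k:ℤ)+1-2) * X3 := by
      rw [← zpow_add_one₀ hX3]
      congr 1
      ring
    apply mul_right_cancel₀ hX3
    linear_combination hmain - (x (2*(k:ℤ)+3) * X1^((k:ℤ))) * q

end
end

section
/- For every integer m ≥ 1 the following identity holds in K, expressing x(2m+2) as a Laurent polynomial in the cluster {x₁, w, x₃}: x(2m+2) · x₁^{m} w x₃^{m−1} = Σ_{e=(e₁,e₂,e₃)∈ℕ³} C(m−1−e₃+e₂, m−1−e₁+e₂) · C(e₁−1, e₃) · C(1, e₂) · x₁^{2e₃+1−e₂} w^{e₁−e₃} x₃^{2m−2e₁−1+e₂} + x₃^{2m−1}(x₃ + x₁), where the sum has finitely many nonzero terms (the binomials force e₂ ≤ 1 and e₃ ≤ e₁ ≤ m−1+e₂). -/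
noncomputable section

lemma ichoose_of_neg {a b : ℤ} (h : b < 0 ∨ a < b) : ichoose a b = 0 := by
  unfold ichoose; rw [if_neg]; omega

lemma ichoose_pascal {a b : ℤ} (h : ¬(a = 0 ∧ b = 0)) :
    ichoose a b = ichoose (a - 1) (b - 1) + ichoose (a - 1) b := by
  unfold ichoose
  by_cases hb : 0 ≤ b ∧ b ≤ a
  · obtain ⟨hb0, hba⟩ := hb
    rw [if_pos ⟨hb0, hba⟩]
    rcases eq_or_lt_of_le hb0 with hb1 | hb1
    · rw [if_neg (by omega), if_pos (by omega)]
      have h1 : b.toNat = 0 := by omega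
      simp [h1]
    · rw [if_pos (by omega)]
      have hA : a.toNat = (a - 1).toNat + 1 := by omega
      have hB : b.toNat = (b - 1).toNat + 1 := by omega
      rw [hA, hB, Nat.choose_succ_succ]
      by_cases hba' : b ≤ a - 1
      · rw [if_pos (by omega)]
      · rw [if_neg (by omega)]
        have hlt : (a - 1).toNat < (b - 1).toNat + 1 := by omega
        rw [Nat.choose_eq_zero_of_lt hlt, Nat.add_zero]
  · rw [if_neg hb, if_neg (by omega), if_neg (by omega)]

lemma ichoose_pred {p : ℤ} (hp : 1 ≤ p) : ichoose p (p - 1) = p.toNat := by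
  unfold ichoose
  rw [if_pos (by omega)]
  have h : p.toNat = (p - 1).toNat + 1 := by omega
  rw [h, Nat.choose_succ_self_right]

lemma cid (m a j c : ℤ) (hm : 1 ≤ m) :
    ichoose (m - c + j) (m - a + j) * ichoose (a - 1) c * ichoose 1 j
      + ichoose (m - 1 - c + j) (m - 1 - a + j) * ichoose (a - 2) (c - 1) * ichoose 1 j
    = ichoose (m - c + j) (m - a + j) * ichoose (a - 2) (c - 1) * ichoose 1 j
      + ichoose (m - 1 - c + j) (m - 1 - a + j) * ichoose (a - 1) c * ichoose 1 j
      + ichoose (m - 1 - c + j) (m - a + j) * ichoose (a - 2) c * ichoose 1 j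
      + (if a = 1 ∧ c = 0 then ichoose 1 j else 0) := by
  by_cases hc : c < 0 ∨ a ≤ c
  · have h1 : ichoose (a - 1) c = 0 := ichoose_of_neg (by omega)
    have h2 : ichoose (a - 2) (c - 1) = 0 := ichoose_of_neg (by omega)
    have h3 : ichoose (a - 2) c = 0 := ichoose_of_neg (by omega)
    have h4 : ¬(a = 1 ∧ c = 0) := by omega
    simp [h1, h2, h3, h4]
  push_neg at hc
  obtain ⟨hc0, hca⟩ := hc
  by_cases hac : a = 1 ∧ c = 0
  · obtain ⟨ha1, hc1⟩ := hac
    subst ha1; subst hc1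
    rw [if_pos ⟨rfl, rfl⟩]
    have z1 : ichoose (1 - 2) (0 - 1) = 0 := ichoose_of_neg (by omega)
    have z2 : ichoose (1 - 2) 0 = 0 := ichoose_of_neg (by omega)
    have z3 : ichoose (1 - 1) 0 = 1 := by unfold ichoose; norm_num
    rw [z1, z2, z3]
    by_cases hj : 0 ≤ j ∧ j ≤ 1
    · have hj1 : ichoose 1 j = 1 := by
        unfold ichoose
        rw [if_pos (by omega)]
        rcases (by omega : j = 0 ∨ j = 1) with rfl | rfl <;> decide
      rw [hj1]
      have e1 : m - 0 + j = (m + j - 1) + 1 := by ring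
      have e2 : m - 1 + j = (m + j - 1) + 1 - 1 := by ring
      rw [e1, e2, ichoose_pred (by omega)]
      by_cases hm2 : 2 ≤ m + j
      · have e3 : m - 1 - 0 + j = (m + j - 2) + 1 := by ring
        have e4 : m - 1 - 1 + j = (m + j - 2) + 1 - 1 := by ring
        rw [e3, e4, ichoose_pred (by omega)]
        omega
      · have hmj : m + j = 1 := by omega
        have z4 : ichoose (m - 1 - 0 + j) (m - 1 - 1 + j) = 0 :=
          ichoose_of_neg (by omega)
        rw [z4]
        omega
    · have hj0 : ichoose 1 j = 0 := by
        unfold ichoose; rw [if_neg (by omega)]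
      rw [hj0]; ring
  · rw [if_neg hac]
    have e1 : m - 1 - c + j = (m - c + j) - 1 := by ring
    have e2 : m - 1 - a + j = (m - a + j) - 1 := by ring
    rw [e1, e2]
    have hP : ichoose (m - c + j) (m - a + j)
        = ichoose ((m - c + j) - 1) ((m - a + j) - 1) + ichoose ((m - c + j) - 1) (m - a + j) :=
      ichoose_pascal (by omega)
    have hB : ichoose (a - 1) c
        = ichoose ((a - 1) - 1) (c - 1) + ichoose ((a - 1) - 1) c :=
      ichoose_pascal (by omega)
    rw [show (a - 1) - 1 = a - 2 by ring] at hB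
    rw [hP, hB]
    ring

def gfun (w : Kf) (m : ℤ) (e : ℤ × ℤ × ℤ) : Kf :=
  ((ichoose (m - 1 - e.2.2 + e.2.1) (m - 1 - e.1 + e.2.1) *
    ichoose (e.1 - 1) e.2.2 * ichoose 1 e.2.1 : ℕ) : Kf) *
    X1 ^ (2 * e.2.2 + 1 - e.2.1) * w ^ (e.1 - e.2.2) * X3 ^ (2 * m - 2 * e.1 - 1 + e.2.1)

lemma gfun_apply (w : Kf) (m a j c : ℤ) :
    gfun w m (a, j, c) =
      ((ichoose (m - 1 - c + j) (m - 1 - a + j) * ichoose (a - 1) c * ichoose 1 j : ℕ) : Kf) *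
        (X1 ^ (2 * c + 1 - j) * w ^ (a - c) * X3 ^ (2 * m - 2 * a - 1 + j)) := by
  simp only [gfun]; ring


lemma gfun_eq_zero {w : Kf} {m : ℤ} {e : ℤ × ℤ × ℤ}
    (h : ¬ (0 ≤ e.2.1 ∧ e.2.1 ≤ 1 ∧ 0 ≤ e.2.2 ∧ e.2.2 < e.1 ∧ e.1 ≤ m - 1 + e.2.1)) :
    gfun w m e = 0 := by
  obtain ⟨a, j, c⟩ := e
  simp only at h
  suffices hz : ichoose (m - 1 - c + j) (m - 1 - a + j) * ichoose (a - 1) c * ichoose 1 j = 0 by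
    rw [gfun_apply, hz]; simp
  rcases (by omega : j < 0 ∨ 1 < j ∨ c < 0 ∨ a - 1 < c ∨ m - 1 - a + j < 0) with h' | h' | h' | h' | h'
  · rw [ichoose_of_neg (Or.inl h')]; ring
  · rw [ichoose_of_neg (Or.inr h')]; ring
  · rw [ichoose_of_neg (Or.inl h')]; ring
  · rw [ichoose_of_neg (Or.inr h')]; ring
  · rw [ichoose_of_neg (Or.inl h')]; ring

lemma gfun_support_subset (w : Kf) (m : ℤ) :
    Function.support (gfun w m) ⊆
      ↑((Finset.Icc (0:ℤ) m) ×ˢ (Finset.Icc (0:ℤ) 1) ×ˢ (Finset.Icc (0:ℤ) m)) := by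
  intro e he
  rcases Decidable.em (0 ≤ e.2.1 ∧ e.2.1 ≤ 1 ∧ 0 ≤ e.2.2 ∧ e.2.2 < e.1 ∧ e.1 ≤ m - 1 + e.2.1) with h | h
  · simp only [Finset.coe_product, Set.mem_prod, Finset.mem_coe, Finset.mem_Icc]
    refine ⟨⟨?_, ?_⟩, ⟨?_, ?_⟩, ?_, ?_⟩ <;> omega
  · exact absurd (gfun_eq_zero h) he

lemma gfun_support_finite (w : Kf) (m : ℤ) : (Function.support (gfun w m)).Finite :=
  Set.Finite.subset (Finset.finite_toSet _) (gfun_support_subset w m)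


def Tsum (w : Kf) (m : ℤ) : Kf := ∑ᶠ e : ℤ × ℤ × ℤ, gfun w m e

def dfun (w : Kf) (m : ℤ) (e : ℤ × ℤ × ℤ) : Kf :=
  (if e.1 = 1 ∧ e.2.2 = 0 then ((ichoose 1 e.2.1 : ℕ) : Kf) else 0) *
    (X1 ^ (2 * e.2.2 + 1 - e.2.1) * w ^ (e.1 - e.2.2) * X3 ^ (2 * (m + 1) - 2 * e.1 - 1 + e.2.1))


set_option maxHeartbeats 1000000 in
lemma gfun_step (w : Kf) (hX1 : X1 ≠ 0) (hX3 : X3 ≠ 0) (hw : w ≠ 0) (m : ℤ) (hm : 1 ≤ m)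
    (a j c : ℤ) :
    gfun w (m + 1) (a, j, c) + X1 ^ 2 * X3 ^ 2 * gfun w (m - 1) (a - 1, j, c - 1)
      = X1 ^ 2 * gfun w m (a - 1, j, c - 1) + X3 ^ 2 * gfun w m (a, j, c)
        + w * gfun w m (a - 1, j, c)
        + (if a = 1 ∧ c = 0 then ((ichoose 1 j : ℕ) : Kf) else 0) *
            (X1 ^ (2 * c + 1 - j) * w ^ (a - c) * X3 ^ (2 * (m + 1) - 2 * a - 1 + j)) := by
  have pe : ∀ (y : Kf), y ≠ 0 → ∀ s t : ℤ, s = 2 + t → y ^ s = y ^ 2 * y ^ t := by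
    intro y hy s t hst
    rw [hst, zpow_add₀ hy, show (2:ℤ) = ((2:ℕ):ℤ) by norm_num, zpow_natCast]
  have h1 : gfun w (m + 1) (a, j, c) =
      ((ichoose (m - c + j) (m - a + j) * ichoose (a - 1) c * ichoose 1 j : ℕ) : Kf) *
        (X1 ^ (2 * c + 1 - j) * w ^ (a - c) * X3 ^ (2 * (m + 1) - 2 * a - 1 + j)) := by
    rw [gfun_apply, show m + 1 - 1 - c + j = m - c + j by ring,
      show m + 1 - 1 - a + j = m - a + j by ring]
  have h2 : X1 ^ 2 * X3 ^ 2 * gfun w (m - 1) (a - 1, j, c - 1) =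
      ((ichoose (m - 1 - c + j) (m - 1 - a + j) * ichoose (a - 2) (c - 1) * ichoose 1 j : ℕ) : Kf) *
        (X1 ^ (2 * c + 1 - j) * w ^ (a - c) * X3 ^ (2 * (m + 1) - 2 * a - 1 + j)) := by
    rw [gfun_apply,
      show m - 1 - 1 - (c - 1) + j = m - 1 - c + j by ring,
      show m - 1 - 1 - (a - 1) + j = m - 1 - a + j by ring,
      show a - 1 - 1 = a - 2 by ring,
      show a - 1 - (c - 1) = a - c by ring,
      pe X1 hX1 (2 * c + 1 - j) (2 * (c - 1) + 1 - j) (by ring),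
      pe X3 hX3 (2 * (m + 1) - 2 * a - 1 + j) (2 * (m - 1) - 2 * (a - 1) - 1 + j) (by ring)]
    ring
  have h3 : X1 ^ 2 * gfun w m (a - 1, j, c - 1) =
      ((ichoose (m - c + j) (m - a + j) * ichoose (a - 2) (c - 1) * ichoose 1 j : ℕ) : Kf) *
        (X1 ^ (2 * c + 1 - j) * w ^ (a - c) * X3 ^ (2 * (m + 1) - 2 * a - 1 + j)) := by
    rw [gfun_apply,
      show m - 1 - (c - 1) + j = m - c + j by ring,
      show m - 1 - (a - 1) + j = m - a + j by ring,
      show a - 1 - 1 = a - 2 by ring,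
      show a - 1 - (c - 1) = a - c by ring,
      show 2 * (m + 1) - 2 * a - 1 + j = 2 * m - 2 * (a - 1) - 1 + j by ring,
      pe X1 hX1 (2 * c + 1 - j) (2 * (c - 1) + 1 - j) (by ring)]
    ring
  have h4 : X3 ^ 2 * gfun w m (a, j, c) =
      ((ichoose (m - 1 - c + j) (m - 1 - a + j) * ichoose (a - 1) c * ichoose 1 j : ℕ) : Kf) *
        (X1 ^ (2 * c + 1 - j) * w ^ (a - c) * X3 ^ (2 * (m + 1) - 2 * a - 1 + j)) := by
    rw [gfun_apply,
      pe X3 hX3 (2 * (m + 1) - 2 * a - 1 + j) (2 * m - 2 * a - 1 + j) (by ring)]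
    ring
  have h5 : w * gfun w m (a - 1, j, c) =
      ((ichoose (m - 1 - c + j) (m - a + j) * ichoose (a - 2) c * ichoose 1 j : ℕ) : Kf) *
        (X1 ^ (2 * c + 1 - j) * w ^ (a - c) * X3 ^ (2 * (m + 1) - 2 * a - 1 + j)) := by
    rw [gfun_apply,
      show m - 1 - (a - 1) + j = m - a + j by ring,
      show a - 1 - 1 = a - 2 by ring,
      show a - c = 1 + (a - 1 - c) by ring, zpow_one_add₀ hw,
      show 2 * (m + 1) - 2 * a - 1 + j = 2 * m - 2 * (a - 1) - 1 + j by ring]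
    ring
  rw [h1, h2, h3, h4, h5]
  have hc := cid m a j c hm
  by_cases hac : a = 1 ∧ c = 0
  · rw [if_pos hac]
    rw [if_pos hac] at hc
    have hcK := congrArg (fun t : ℕ => (t : Kf)) hc
    push_cast at hcK ⊢
    linear_combination (X1 ^ (2 * c + 1 - j) * w ^ (a - c) * X3 ^ (2 * (m + 1) - 2 * a - 1 + j)) * hcK
  · rw [if_neg hac]
    rw [if_neg hac] at hc
    have hcK := congrArg (fun t : ℕ => (t : Kf)) hc
    push_cast at hcK ⊢
    linear_combination (X1 ^ (2 * c + 1 - j) * w ^ (a - c) * X3 ^ (2 * (m + 1) - 2 * a - 1 + j)) * hcK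

lemma hmulfin (c : Kf) (f : ℤ × ℤ × ℤ → Kf) (hf : (Function.support f).Finite) :
    (Function.support fun e => c * f e).Finite := by
  apply hf.subset
  intro e he
  simp only [Function.mem_support] at he ⊢
  exact fun h => he (by rw [h, mul_zero])

lemma haddfin (f g : ℤ × ℤ × ℤ → Kf) (hf : (Function.support f).Finite)
    (hg : (Function.support g).Finite) :
    (Function.support fun e => f e + g e).Finite := by
  apply (hf.union hg).subset
  intro e he
  simp only [Function.mem_support, Set.mem_union] at he ⊢
  by_contra hcon
  push_neg at hcon
  exact he (by rw [hcon.1, hcon.2, add_zero])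

set_option maxHeartbeats 1000000 in
lemma Trec (w : Kf) (hX1 : X1 ≠ 0) (hX3 : X3 ≠ 0) (hw : w ≠ 0) (m : ℤ) (hm : 1 ≤ m) :
    Tsum w (m + 1) + X1 ^ 2 * X3 ^ 2 * Tsum w (m - 1)
      = (X1 ^ 2 + X3 ^ 2 + w) * Tsum w m + w * X3 ^ (2 * m - 1) * (X1 + X3) := by
  classical
  let E : (ℤ × ℤ × ℤ) ≃ (ℤ × ℤ × ℤ) :=
    (Equiv.subRight (1 : ℤ)).prodCongr ((Equiv.refl ℤ).prodCongr (Equiv.subRight (1 : ℤ)))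
  let E' : (ℤ × ℤ × ℤ) ≃ (ℤ × ℤ × ℤ) :=
    (Equiv.subRight (1 : ℤ)).prodCongr (Equiv.refl (ℤ × ℤ))
  have hEapp : ∀ e : ℤ × ℤ × ℤ, E e = (e.1 - 1, e.2.1, e.2.2 - 1) := fun _ => rfl
  have hE'app : ∀ e : ℤ × ℤ × ℤ, E' e = (e.1 - 1, e.2.1, e.2.2) := fun _ => rfl
  have hfinE : ∀ k : ℤ, (Function.support fun e => gfun w k (E e)).Finite := by
    intro k
    have h : (Function.support fun e => gfun w k (E e)) = E ⁻¹' Function.support (gfun w k) := rfl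
    rw [h]
    exact (gfun_support_finite w k).preimage E.injective.injOn
  have hfinE' : ∀ k : ℤ, (Function.support fun e => gfun w k (E' e)).Finite := by
    intro k
    have h : (Function.support fun e => gfun w k (E' e)) = E' ⁻¹' Function.support (gfun w k) := rfl
    rw [h]
    exact (gfun_support_finite w k).preimage E'.injective.injOn
  have hcompE : ∀ k : ℤ, (∑ᶠ e : ℤ × ℤ × ℤ, gfun w k (E e)) = Tsum w k := fun k =>
    finsum_comp_equiv E
  have hcompE' : ∀ k : ℤ, (∑ᶠ e : ℤ × ℤ × ℤ, gfun w k (E' e)) = Tsum w k := fun k =>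
    finsum_comp_equiv E'
  have hkey : ∀ e : ℤ × ℤ × ℤ,
      gfun w (m + 1) e + X1 ^ 2 * X3 ^ 2 * gfun w (m - 1) (E e)
        = X1 ^ 2 * gfun w m (E e) + X3 ^ 2 * gfun w m e + w * gfun w m (E' e) + dfun w m e := by
    intro e
    obtain ⟨a, j, c⟩ := e
    rw [hEapp, hE'app]
    simpa [dfun] using gfun_step w hX1 hX3 hw m hm a j c
  have hf1 := hmulfin (X1 ^ 2) _ (hfinE m)
  have hf2 := hmulfin (X3 ^ 2) _ (gfun_support_finite w m)
  have hf3 := hmulfin w _ (hfinE' m)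
  have hsub : Function.support (dfun w m) ⊆
      ↑({((1:ℤ),(0:ℤ),(0:ℤ)), ((1:ℤ),(1:ℤ),(0:ℤ))} : Finset (ℤ × ℤ × ℤ)) := by
    intro e he
    obtain ⟨a, j, c⟩ := e
    simp only [Function.mem_support, dfun] at he
    simp only [Finset.coe_insert, Finset.coe_singleton, Set.mem_insert_iff, Set.mem_singleton_iff,
      Prod.mk.injEq]
    by_cases hac : a = 1 ∧ c = 0
    · have hj : ¬(j < 0 ∨ 1 < j) := by
        intro hj'
        exact he (by rw [ichoose_of_neg (by omega : j < 0 ∨ (1:ℤ) < j)]; simp)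
      push_neg at hj
      obtain ⟨ha, hc⟩ := hac
      omega
    · exact absurd (by rw [if_neg hac]; simp) he
  have hf4 : (Function.support (dfun w m)).Finite :=
    Set.Finite.subset (Finset.finite_toSet _) hsub
  have d1 : dfun w m ((1:ℤ),(0:ℤ),(0:ℤ)) = w * X3 ^ (2 * m - 1) * X1 := by
    show (if (1:ℤ) = 1 ∧ (0:ℤ) = 0 then ((ichoose 1 0 : ℕ) : Kf) else 0) *
      (X1 ^ (2 * (0:ℤ) + 1 - 0) * w ^ ((1:ℤ) - 0) * X3 ^ (2 * (m + 1) - 2 * 1 - 1 + 0)) = _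
    rw [if_pos ⟨rfl, rfl⟩,
      show 2 * ((0:ℤ)) + 1 - 0 = 1 by ring, show ((1:ℤ) - 0) = 1 by ring,
      show 2 * (m + 1) - 2 * (1:ℤ) - 1 + 0 = 2 * m - 1 by ring,
      zpow_one, zpow_one]
    norm_num [ichoose]
    ring
  have d2 : dfun w m ((1:ℤ),(1:ℤ),(0:ℤ)) = w * X3 ^ (2 * m - 1) * X3 := by
    show (if (1:ℤ) = 1 ∧ (0:ℤ) = 0 then ((ichoose 1 1 : ℕ) : Kf) else 0) *
      (X1 ^ (2 * (0:ℤ) + 1 - 1) * w ^ ((1:ℤ) - 0) * X3 ^ (2 * (m + 1) - 2 * 1 - 1 + 1)) = _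
    rw [if_pos ⟨rfl, rfl⟩,
      show 2 * ((0:ℤ)) + 1 - 1 = 0 by ring, show ((1:ℤ) - 0) = 1 by ring,
      show 2 * (m + 1) - 2 * (1:ℤ) - 1 + 1 = (2 * m - 1) + 1 by ring,
      zpow_add_one₀ hX3, zpow_one, zpow_zero]
    norm_num [ichoose]
    ring
  have hdelta : ∑ᶠ e : ℤ × ℤ × ℤ, dfun w m e = w * X3 ^ (2 * m - 1) * (X1 + X3) := by
    rw [finsum_eq_sum_of_support_subset _ hsub, Finset.sum_insert (by decide),
      Finset.sum_singleton, d1, d2]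
    ring
  calc Tsum w (m + 1) + X1 ^ 2 * X3 ^ 2 * Tsum w (m - 1)
      = (∑ᶠ e : ℤ × ℤ × ℤ, gfun w (m + 1) e)
          + ∑ᶠ e : ℤ × ℤ × ℤ, X1 ^ 2 * X3 ^ 2 * gfun w (m - 1) (E e) := by
        rw [← hcompE (m - 1), mul_finsum _ _]
        rfl
    _ = ∑ᶠ e : ℤ × ℤ × ℤ, (gfun w (m + 1) e + X1 ^ 2 * X3 ^ 2 * gfun w (m - 1) (E e)) :=
        (finsum_add_distrib (gfun_support_finite w (m + 1)) (hmulfin _ _ (hfinE (m - 1)))).symm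
    _ = ∑ᶠ e : ℤ × ℤ × ℤ,
          (X1 ^ 2 * gfun w m (E e) + X3 ^ 2 * gfun w m e + w * gfun w m (E' e) + dfun w m e) :=
        finsum_congr hkey
    _ = (∑ᶠ e : ℤ × ℤ × ℤ, (X1 ^ 2 * gfun w m (E e) + X3 ^ 2 * gfun w m e + w * gfun w m (E' e)))
          + ∑ᶠ e : ℤ × ℤ × ℤ, dfun w m e :=
        finsum_add_distrib (haddfin _ _ (haddfin _ _ hf1 hf2) hf3) hf4
    _ = ((∑ᶠ e : ℤ × ℤ × ℤ, (X1 ^ 2 * gfun w m (E e) + X3 ^ 2 * gfun w m e))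
          + ∑ᶠ e : ℤ × ℤ × ℤ, w * gfun w m (E' e)) + ∑ᶠ e : ℤ × ℤ × ℤ, dfun w m e := by
        rw [finsum_add_distrib (haddfin _ _ hf1 hf2) hf3]
    _ = (((∑ᶠ e : ℤ × ℤ × ℤ, X1 ^ 2 * gfun w m (E e)) + ∑ᶠ e : ℤ × ℤ × ℤ, X3 ^ 2 * gfun w m e)
          + ∑ᶠ e : ℤ × ℤ × ℤ, w * gfun w m (E' e)) + ∑ᶠ e : ℤ × ℤ × ℤ, dfun w m e := by
        rw [finsum_add_distrib hf1 hf2]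
    _ = ((X1 ^ 2 * Tsum w m + X3 ^ 2 * Tsum w m) + w * Tsum w m)
          + w * X3 ^ (2 * m - 1) * (X1 + X3) := by
        rw [← mul_finsum _ _, ← mul_finsum _ _,
          ← mul_finsum _ _, hcompE m, hcompE' m, hdelta]
        rfl
    _ = (X1 ^ 2 + X3 ^ 2 + w) * Tsum w m + w * X3 ^ (2 * m - 1) * (X1 + X3) := by ring

lemma Teval1 (w : Kf) : Tsum w 1 = w := by
  classical
  have hicc : Finset.Icc (0:ℤ) 1 = {0, 1} := by decide
  have hsub := gfun_support_subset w 1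
  rw [hicc] at hsub
  rw [Tsum, finsum_eq_sum_of_support_subset _ hsub]
  simp only [Finset.sum_product]
  rw [Finset.sum_pair (by decide : (0:ℤ) ≠ 1), Finset.sum_pair (by decide : (0:ℤ) ≠ 1),
    Finset.sum_pair (by decide : (0:ℤ) ≠ 1)]
  norm_num [gfun, ichoose]

set_option maxHeartbeats 2000000 in
lemma Teval2 (w : Kf) : Tsum w 2 = X1 * w * X3 + 2 * (w * X3 ^ 2) + w ^ 2 + X1 ^ 2 * w := by
  classical
  have hicc : Finset.Icc (0:ℤ) 2 = {0, 1, 2} := by decide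
  have hicc1 : Finset.Icc (0:ℤ) 1 = {0, 1} := by decide
  have hsub := gfun_support_subset w 2
  rw [hicc, hicc1] at hsub
  rw [Tsum, finsum_eq_sum_of_support_subset _ hsub]
  norm_num [Finset.sum_product, Finset.sum_insert, Finset.mem_insert, Finset.mem_singleton,
    Finset.sum_singleton, gfun, ichoose]
  have h2 : ((Int.toNat 2 : ℕ) : Kf) = 2 := by
    rw [show Int.toNat 2 = 2 from rfl]; norm_num
  rw [h2]
  have hz : ∀ y : Kf, y ^ (2:ℤ) = y ^ (2:ℕ) := fun y => by
    rw [← zpow_natCast]; norm_num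
  ring

set_option maxHeartbeats 2000000 in
theorem stmt5 (x : ℤ → Kf)
    (h1 : x 1 = X1) (h2 : x 2 = X2) (h3 : x 3 = X3)
    (hne : ∀ m : ℤ, x m ≠ 0)
    (hrec : ∀ m : ℤ, x m * x (m + 3) = x (m + 1) * x (m + 2) + 1)
    (w : Kf) (hw : w = (X1 + X3) / X2) :
    ∀ m : ℤ, 1 ≤ m →
      ∀ f : ℕ × ℕ × ℕ → Kf,
        (f = fun e =>
          ((ichoose (m - 1 - (e.2.2 : ℤ) + (e.2.1 : ℤ)) (m - 1 - (e.1 : ℤ) + (e.2.1 : ℤ)) *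
            ichoose ((e.1 : ℤ) - 1) (e.2.2 : ℤ) *
            ichoose 1 (e.2.1 : ℤ) : ℕ) : Kf) *
            X1 ^ (2 * (e.2.2 : ℤ) + 1 - (e.2.1 : ℤ)) *
            w ^ ((e.1 : ℤ) - (e.2.2 : ℤ)) *
            X3 ^ (2 * m - 2 * (e.1 : ℤ) - 1 + (e.2.1 : ℤ))) →
        (Function.support f).Finite ∧
        x (2 * m + 2) * X1 ^ m * w * X3 ^ (m - 1) =
          (∑ᶠ e : ℕ × ℕ × ℕ, f e) + X3 ^ (2 * m - 1) * (X3 + X1) := by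
  classical
  have hX1 : X1 ≠ 0 := h1 ▸ hne 1
  have hX2 : X2 ≠ 0 := h2 ▸ hne 2
  have hX3 : X3 ≠ 0 := h3 ▸ hne 3
  have hX13 : X1 + X3 ≠ 0 := by
    have hmap : X1 + X3
        = algebraMap (MvPolynomial (Fin 3) ℚ) Kf (MvPolynomial.X 0 + MvPolynomial.X 2) := by
      rw [map_add]; rfl
    rw [hmap]
    intro hcon
    have h0 : (MvPolynomial.X 0 + MvPolynomial.X 2 : MvPolynomial (Fin 3) ℚ) = 0 :=
      IsFractionRing.injective (MvPolynomial (Fin 3) ℚ) Kf (by rw [hcon, map_zero])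
    have hev := congrArg (MvPolynomial.eval fun i : Fin 3 => if i = 0 then (1 : ℚ) else 0) h0
    simp at hev
  have hwne : w ≠ 0 := by rw [hw]; exact div_ne_zero hX13 hX2
  have hwx2 : w * X2 = X1 + X3 := by rw [hw]; field_simp
  have hG : ∀ k : ℤ, (x k + x (k + 2)) * x (k + 3) = (x (k + 2) + x (k + 4)) * x (k + 1) := by
    intro k
    have r1 := hrec k
    have r2 := hrec (k + 1)
    rw [show k + 1 + 3 = k + 4 by ring, show k + 1 + 1 = k + 2 by ring,
      show k + 1 + 2 = k + 3 by ring] at r2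
    linear_combination r1 - r2
  have hx4 : X1 * x 4 = X2 * X3 + 1 := by
    have r := hrec 1
    norm_num at r
    rw [h1, h2, h3] at r
    linear_combination r
  have hOdd : ∀ n : ℕ, x (2 * (n : ℤ) + 1) + x (2 * (n : ℤ) + 3) = w * x (2 * (n : ℤ) + 2) := by
    intro n
    induction n with
    | zero =>
      norm_num
      rw [h1, h2, h3]
      linear_combination -hwx2
    | succ n ih =>
      push_cast
      rw [show 2 * ((n : ℤ) + 1) + 1 = 2 * (n : ℤ) + 3 by ring,
        show 2 * ((n : ℤ) + 1) + 3 = 2 * (n : ℤ) + 5 by ring,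
        show 2 * ((n : ℤ) + 1) + 2 = 2 * (n : ℤ) + 4 by ring]
      have g := hG (2 * (n : ℤ) + 1)
      rw [show 2 * (n : ℤ) + 1 + 2 = 2 * (n : ℤ) + 3 by ring,
        show 2 * (n : ℤ) + 1 + 3 = 2 * (n : ℤ) + 4 by ring,
        show 2 * (n : ℤ) + 1 + 4 = 2 * (n : ℤ) + 5 by ring,
        show 2 * (n : ℤ) + 1 + 1 = 2 * (n : ℤ) + 2 by ring] at g
      refine mul_right_cancel₀ (hne (2 * (n : ℤ) + 2)) ?_
      rw [ih] at g
      linear_combination -g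
  have hEven : ∀ n : ℕ,
      (x (2 * (n : ℤ) + 2) + x (2 * (n : ℤ) + 4)) * X3 = (X2 + x 4) * x (2 * (n : ℤ) + 3) := by
    intro n
    induction n with
    | zero =>
      norm_num
      rw [h2, h3]
    | succ n ih =>
      push_cast
      rw [show 2 * ((n : ℤ) + 1) + 2 = 2 * (n : ℤ) + 4 by ring,
        show 2 * ((n : ℤ) + 1) + 4 = 2 * (n : ℤ) + 6 by ring,
        show 2 * ((n : ℤ) + 1) + 3 = 2 * (n : ℤ) + 5 by ring]
      have g := hG (2 * (n : ℤ) + 2)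
      rw [show 2 * (n : ℤ) + 2 + 2 = 2 * (n : ℤ) + 4 by ring,
        show 2 * (n : ℤ) + 2 + 3 = 2 * (n : ℤ) + 5 by ring,
        show 2 * (n : ℤ) + 2 + 4 = 2 * (n : ℤ) + 6 by ring,
        show 2 * (n : ℤ) + 2 + 1 = 2 * (n : ℤ) + 3 by ring] at g
      refine mul_right_cancel₀ (hne (2 * (n : ℤ) + 3)) ?_
      linear_combination x (2 * (n : ℤ) + 5) * ih - X3 * g
  have hKey : ∀ n : ℕ, X1 * X3 * x (2 * (n : ℤ) + 6) + X1 * X3 * x (2 * (n : ℤ) + 2)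
      = (X1 ^ 2 + X3 ^ 2 + w) * x (2 * (n : ℤ) + 4) := by
    intro n
    have e1 := hEven n
    have e2 := hEven (n + 1)
    push_cast at e2
    rw [show 2 * ((n : ℤ) + 1) + 2 = 2 * (n : ℤ) + 4 by ring,
      show 2 * ((n : ℤ) + 1) + 4 = 2 * (n : ℤ) + 6 by ring,
      show 2 * ((n : ℤ) + 1) + 3 = 2 * (n : ℤ) + 5 by ring] at e2
    have o := hOdd (n + 1)
    push_cast at o
    rw [show 2 * ((n : ℤ) + 1) + 1 = 2 * (n : ℤ) + 3 by ring,
      show 2 * ((n : ℤ) + 1) + 3 = 2 * (n : ℤ) + 5 by ring,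
      show 2 * ((n : ℤ) + 1) + 2 = 2 * (n : ℤ) + 4 by ring] at o
    linear_combination X1 * e1 + X1 * e2 + X1 * (X2 + x 4) * o
      + x (2 * (n : ℤ) + 4) * X1 * hwx2 + x (2 * (n : ℤ) + 4) * w * hx4
      + x (2 * (n : ℤ) + 4) * X3 * hwx2
  have hx5 : x 5 * (X1 * X2) = X2 * X3 ^ 2 + X3 + X1 := by
    have r2 := hrec 2
    norm_num at r2
    rw [h2, h3] at r2
    linear_combination X1 * r2 + X3 * hx4
  have hx6 : x 6 = ((X2 * X3 + 1) * (X2 * X3 ^ 2 + X3 + X1) + X1 ^ 2 * X2) / (X1 ^ 2 * X2 * X3) := by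
    have r3 := hrec 3
    norm_num at r3
    rw [h3] at r3
    rw [eq_div_iff (by exact mul_ne_zero (mul_ne_zero (pow_ne_zero 2 hX1) hX2) hX3)]
    linear_combination X1 ^ 2 * X2 * r3 + X1 * X2 * x 5 * hx4 + (X2 * X3 + 1) * hx5
  have main : ∀ n : ℕ, x (2 * (n : ℤ) + 4) * X1 ^ (n + 1) * w * X3 ^ n
      = Tsum w ((n : ℤ) + 1) + X3 ^ (2 * n + 1) * (X3 + X1) := by
    intro n
    induction n using Nat.twoStepInduction with
    | zero =>
      norm_num
      rw [Teval1]
      have hx4' : x 4 = (X2 * X3 + 1) / X1 := by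
        rw [eq_div_iff hX1]; linear_combination hx4
      rw [hx4', hw]
      field_simp
      ring
    | one =>
      norm_num
      rw [Teval2, hx6, hw]
      field_simp [hX1, hX2, hX3]
      ring
    | more n ih1 ih2 =>
      push_cast
      push_cast at ih2
      rw [show 2 * ((n : ℤ) + 1) + 4 = 2 * (n : ℤ) + 6 by ring,
        show (n : ℤ) + 1 + 1 = (n : ℤ) + 2 by ring] at ih2
      have trec := Trec w hX1 hX3 hwne ((n : ℤ) + 2) (by omega)
      rw [show (n : ℤ) + 2 + 1 = (n : ℤ) + 3 by ring,
        show (n : ℤ) + 2 - 1 = (n : ℤ) + 1 by ring,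
        show 2 * ((n : ℤ) + 2) - 1 = ((2 * n + 3 : ℕ) : ℤ) by push_cast; ring,
        zpow_natCast] at trec
      have K := hKey (n + 1)
      push_cast at K
      rw [show 2 * ((n : ℤ) + 1) + 6 = 2 * (n : ℤ) + 8 by ring,
        show 2 * ((n : ℤ) + 1) + 2 = 2 * (n : ℤ) + 4 by ring,
        show 2 * ((n : ℤ) + 1) + 4 = 2 * (n : ℤ) + 6 by ring] at K
      rw [show 2 * ((n : ℤ) + 2) + 4 = 2 * (n : ℤ) + 8 by ring,
        show (n : ℤ) + 2 + 1 = (n : ℤ) + 3 by ring]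
      linear_combination (X1 ^ (n + 2) * w * X3 ^ (n + 1)) * K - X1 ^ 2 * X3 ^ 2 * ih1
        + (X1 ^ 2 + X3 ^ 2 + w) * ih2 - trec
  intro m hm f hf
  obtain ⟨n, rfl⟩ : ∃ n : ℕ, m = (n : ℤ) + 1 := ⟨(m - 1).toNat, by omega⟩
  subst hf
  have hsupf : Function.support (fun e : ℕ × ℕ × ℕ =>
      ((ichoose (((n : ℤ) + 1) - 1 - (e.2.2 : ℤ) + (e.2.1 : ℤ))
          (((n : ℤ) + 1) - 1 - (e.1 : ℤ) + (e.2.1 : ℤ)) *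
        ichoose ((e.1 : ℤ) - 1) (e.2.2 : ℤ) * ichoose 1 (e.2.1 : ℤ) : ℕ) : Kf) *
        X1 ^ (2 * (e.2.2 : ℤ) + 1 - (e.2.1 : ℤ)) * w ^ ((e.1 : ℤ) - (e.2.2 : ℤ)) *
        X3 ^ (2 * ((n : ℤ) + 1) - 2 * (e.1 : ℤ) - 1 + (e.2.1 : ℤ)))
      ⊆ ↑((Finset.range (n + 2)) ×ˢ (Finset.range 2) ×ˢ (Finset.range (n + 2))) := by
    intro e he
    obtain ⟨a, j, c⟩ := e
    simp only [Function.mem_support] at he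
    simp only [Finset.coe_product, Set.mem_prod, Finset.mem_coe, Finset.mem_range]
    by_contra hcon
    push_neg at hcon
    apply he
    suffices hz : ichoose (((n : ℤ) + 1) - 1 - (c : ℤ) + (j : ℤ)) (((n : ℤ) + 1) - 1 - (a : ℤ) + (j : ℤ)) *
        ichoose ((a : ℤ) - 1) (c : ℤ) * ichoose 1 (j : ℤ) = 0 by
      simp only [hz, Nat.cast_zero, zero_mul]
    by_cases hj2 : 2 ≤ j
    · rw [ichoose_of_neg (a := (1:ℤ)) (b := (j : ℤ)) (Or.inr (by exact_mod_cast hj2))]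
      ring
    · by_cases ha2 : n + 2 ≤ a
      · rw [ichoose_of_neg (Or.inl (by push_cast; omega))]
        ring
      · have hc2 : n + 2 ≤ c := hcon (by omega) (by omega)
        rw [ichoose_of_neg (a := (a : ℤ) - 1) (b := (c : ℤ)) (Or.inr (by push_cast; omega))]
        ring
  refine ⟨Set.Finite.subset (Finset.finite_toSet _) hsupf, ?_⟩
  have hfs : (∑ᶠ e : ℕ × ℕ × ℕ,
      ((ichoose (((n : ℤ) + 1) - 1 - (e.2.2 : ℤ) + (e.2.1 : ℤ))
          (((n : ℤ) + 1) - 1 - (e.1 : ℤ) + (e.2.1 : ℤ)) *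
        ichoose ((e.1 : ℤ) - 1) (e.2.2 : ℤ) * ichoose 1 (e.2.1 : ℤ) : ℕ) : Kf) *
        X1 ^ (2 * (e.2.2 : ℤ) + 1 - (e.2.1 : ℤ)) * w ^ ((e.1 : ℤ) - (e.2.2 : ℤ)) *
        X3 ^ (2 * ((n : ℤ) + 1) - 2 * (e.1 : ℤ) - 1 + (e.2.1 : ℤ)))
      = Tsum w ((n : ℤ) + 1) := by
    rw [finsum_eq_sum_of_support_subset _ hsupf, Tsum,
      finsum_eq_sum_of_support_subset _ (gfun_support_subset w ((n : ℤ) + 1))]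
    refine Finset.sum_nbij' (fun e => ((e.1 : ℤ), (e.2.1 : ℤ), (e.2.2 : ℤ)))
      (fun e => (e.1.toNat, e.2.1.toNat, e.2.2.toNat)) ?_ ?_ ?_ ?_ ?_
    · intro e hmem
      obtain ⟨a, j, c⟩ := e
      simp only [Finset.mem_product, Finset.mem_range] at hmem
      simp only [Finset.mem_product, Finset.mem_Icc]
      refine ⟨⟨?_, ?_⟩, ⟨?_, ?_⟩, ?_, ?_⟩ <;> push_cast <;> omega
    · intro e hmem
      obtain ⟨a, j, c⟩ := e
      simp only [Finset.mem_product, Finset.mem_Icc] at hmem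
      simp only [Finset.mem_product, Finset.mem_range]
      refine ⟨?_, ?_, ?_⟩ <;> omega
    · intro e _
      obtain ⟨a, j, c⟩ := e
      simp
    · intro e hmem
      obtain ⟨a, j, c⟩ := e
      simp only [Finset.mem_product, Finset.mem_Icc] at hmem
      simp only [Prod.mk.injEq]
      refine ⟨?_, ?_, ?_⟩ <;> omega
    · intro e _
      rfl
  rw [hfs]
  have M := main n
  rw [← zpow_natCast X1 (n + 1), ← zpow_natCast X3 n, ← zpow_natCast X3 (2 * n + 1)] at M
  push_cast at M
  rw [show 2 * ((n : ℤ) + 1) + 2 = 2 * (n : ℤ) + 4 by ring,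
    show (n : ℤ) + 1 - 1 = (n : ℤ) by ring,
    show 2 * ((n : ℤ) + 1) - 1 = 2 * (n : ℤ) + 1 by ring]
  exact M

end
end
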